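/- arXiv:1601.00100 — 2 statements merged into one kernel-verified Lean document; each statement's English description precedes it below -/
import Mathlib

section
/- Let ω be a positive continuous weight on ℝⁿ that is strong A_∞, with associated distance d_ω. Then for any x₀ and r > 0, the d_ω-ball B^ω(x₀,r) has ω-volume comparable to rⁿ: there exist constants C₁, C₂ > 0 depending only on the strong A_∞ constants and n such that C₂ rⁿ ≤ ∫_{B^ω(x₀,r)} ω(x) dx ≤ C₁ rⁿ, provided ω additionally satisfies the isoperimetric inequality with uniform constant (giving the lower bound) and the doubling property. -/
open MeasureTheory Metric

noncomputable def deltaOmega (n : ℕ) (ω : EuclideanSpace ℝ (Fin n) → ℝ)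
    (x y : EuclideanSpace ℝ (Fin n)) : ℝ :=
  (∫ z in ball (midpoint ℝ x y) (dist x y / 2), ω z) ^ ((n : ℝ)⁻¹)

noncomputable def dOmega (n : ℕ) (ω : EuclideanSpace ℝ (Fin n) → ℝ)
    (x y : EuclideanSpace ℝ (Fin n)) : ℝ :=
  sInf { L : ℝ | ∃ γ : ℝ → EuclideanSpace ℝ (Fin n), γ 0 = x ∧ γ 1 = y ∧
    ContDiff ℝ 1 γ ∧ L = ∫ t in (0 : ℝ)..1, ω (γ t) ^ ((n : ℝ)⁻¹) * ‖deriv γ t‖ }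

/-- The d_ω distance from a point to itself vanishes. -/
lemma dOmega_self (n : ℕ) (ω : EuclideanSpace ℝ (Fin n) → ℝ)
    (hpos : ∀ x, 0 < ω x) (x₀ : EuclideanSpace ℝ (Fin n)) :
    dOmega n ω x₀ x₀ = 0 := by
  have hmem : (0 : ℝ) ∈ { L : ℝ | ∃ γ : ℝ → EuclideanSpace ℝ (Fin n), γ 0 = x₀ ∧ γ 1 = x₀ ∧
      ContDiff ℝ 1 γ ∧ L = ∫ t in (0 : ℝ)..1, ω (γ t) ^ ((n : ℝ)⁻¹) * ‖deriv γ t‖ } := by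
    refine ⟨fun _ => x₀, rfl, rfl, contDiff_const, ?_⟩
    simp [deriv_const']
  have hlb : ∀ L ∈ { L : ℝ | ∃ γ : ℝ → EuclideanSpace ℝ (Fin n), γ 0 = x₀ ∧ γ 1 = x₀ ∧
      ContDiff ℝ 1 γ ∧ L = ∫ t in (0 : ℝ)..1, ω (γ t) ^ ((n : ℝ)⁻¹) * ‖deriv γ t‖ },
      (0 : ℝ) ≤ L := by
    rintro L ⟨γ, -, -, -, rfl⟩
    exact intervalIntegral.integral_nonneg (by norm_num)
      (fun u _ => mul_nonneg (Real.rpow_nonneg (hpos _).le _) (norm_nonneg _))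
  exact le_antisymm (csInf_le ⟨0, hlb⟩ hmem) (le_csInf ⟨0, hmem⟩ hlb)

theorem stmt_6 {n : ℕ} (hn : 0 < n) (c C C_I C_d : ℝ)
    (hc : 0 < c) (hC : 0 < C) (hCI : 0 < C_I) (hCd : 0 < C_d) :
    ∃ C₁ > 0, ∃ C₂ > 0, ∀ ω : EuclideanSpace ℝ (Fin n) → ℝ,
      (∀ x, 0 < ω x) → Continuous ω → LocallyIntegrable ω volume →
      -- strong A_∞ : c δ_ω ≤ d_ω ≤ C δ_ω
      (∀ x y, c * deltaOmega n ω x y ≤ dOmega n ω x y ∧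
        dOmega n ω x y ≤ C * deltaOmega n ω x y) →
      -- isoperimetric (Sobolev, p = 1) inequality with uniform constant C_I
      (∀ f : EuclideanSpace ℝ (Fin n) → ℝ, ContDiff ℝ (⊤ : ℕ∞) f → HasCompactSupport f →
        (∫ x, |f x| ^ ((n : ℝ) / ((n : ℝ) - 1)) * ω x) ^ (((n : ℝ) - 1) / n) ≤
          C_I * ∫ x, ω x ^ (-(1 : ℝ) / n) * ‖fderiv ℝ f x‖ * ω x) →
      -- doubling property with constant C_d
      (∀ (p : EuclideanSpace ℝ (Fin n)) (R : ℝ), 0 < R →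
        ∫ x in ball p (2 * R), ω x ≤ C_d * ∫ x in ball p R, ω x) →
      ∀ (x₀ : EuclideanSpace ℝ (Fin n)) (r : ℝ), 0 < r →
        C₂ * r ^ (n : ℝ) ≤ (∫ x in {x | dOmega n ω x₀ x < r}, ω x) ∧
          (∫ x in {x | dOmega n ω x₀ x < r}, ω x) ≤ C₁ * r ^ (n : ℝ) := by
  refine ⟨C_d ^ 3 / c ^ n, by positivity, 1 / (C ^ n * C_d), by positivity, ?_⟩
  intro ω hpos hcont hloc hA hIso hDub x₀ r hr
  set B := {x : EuclideanSpace ℝ (Fin n) | dOmega n ω x₀ x < r} with hBdef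
  set G : ℝ → ℝ := fun ρ => ∫ x in ball x₀ ρ, ω x with hGdef
  have hωnn : ∀ x, 0 ≤ ω x := fun x => (hpos x).le
  have hIntBall : ∀ (p : EuclideanSpace ℝ (Fin n)) (ρ : ℝ), IntegrableOn ω (ball p ρ) volume := fun p ρ =>
    (hloc.integrableOn_isCompact (isCompact_closedBall p ρ)).mono_set ball_subset_closedBall
  have hmono : ∀ (s : Set (EuclideanSpace ℝ (Fin n))) (p : EuclideanSpace ℝ (Fin n)) (ρ : ℝ), s ⊆ ball p ρ →
      ∫ x in s, ω x ≤ ∫ x in ball p ρ, ω x := fun s p ρ hs =>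
    setIntegral_mono_set (hIntBall p ρ) (ae_of_all _ hωnn) hs.eventuallyLE
  have Gmono : ∀ {ρ₁ ρ₂ : ℝ}, ρ₁ ≤ ρ₂ → G ρ₁ ≤ G ρ₂ := fun h =>
    hmono _ _ _ (ball_subset_ball h)
  -- key chain : points of B control Euclidean ball masses
  have key : ∀ x : EuclideanSpace ℝ (Fin n), x ∈ B → x ≠ x₀ → G (2 * dist x₀ x) ≤ C_d ^ 3 * (r / c) ^ n := by
    intro x hxB hxne
    set s := dist x₀ x with hs
    have hspos : 0 < s := dist_pos.2 (Ne.symm hxne)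
    set m := midpoint ℝ x₀ x with hm
    set I := ∫ z in ball m (s / 2), ω z with hI
    have hI0 : 0 ≤ I := setIntegral_nonneg measurableSet_ball fun _ _ => hωnn _
    have hδlt : deltaOmega n ω x₀ x < r / c := by
      have h1 := (hA x₀ x).1
      have h2 : dOmega n ω x₀ x < r := hxB
      rw [lt_div_iff₀' hc]
      exact lt_of_le_of_lt h1 h2
    have hIlt : I < (r / c) ^ n := by
      have hδ : deltaOmega n ω x₀ x = I ^ ((n : ℝ)⁻¹) := rfl
      rw [hδ] at hδlt
      have h2 : (I ^ ((n : ℝ)⁻¹)) ^ n < (r / c) ^ n :=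
        pow_lt_pow_left₀ hδlt (Real.rpow_nonneg hI0 _) hn.ne'
      rwa [Real.rpow_inv_natCast_pow hI0 hn.ne'] at h2
    have hmdist : dist x₀ m = s / 2 := by
      rw [hm, dist_left_midpoint, show ‖(2 : ℝ)‖ = 2 from by norm_num, hs]
      ring
    have step1 : ∫ z in ball m s, ω z ≤ C_d * I := by
      have := hDub m (s / 2) (by positivity)
      rwa [show 2 * (s / 2) = s by ring] at this
    have step2 : G (s / 2) ≤ C_d * I := by
      refine le_trans (hmono _ m s ?_) step1
      intro z hz
      have : dist z m ≤ dist z x₀ + dist x₀ m := dist_triangle _ _ _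
      have hz' : dist z x₀ < s / 2 := hz
      simp only [mem_ball]
      calc dist z m ≤ dist z x₀ + dist x₀ m := dist_triangle _ _ _
        _ < s / 2 + s / 2 := by rw [hmdist]; linarith
        _ = s := by ring
    have step3 : G s ≤ C_d * G (s / 2) := by
      have := hDub x₀ (s / 2) (by positivity)
      rwa [show 2 * (s / 2) = s by ring] at this
    have step4 : G (2 * s) ≤ C_d * G s := hDub x₀ s hspos
    calc G (2 * s) ≤ C_d * G s := step4
      _ ≤ C_d * (C_d * G (s / 2)) := by
          exact mul_le_mul_of_nonneg_left step3 hCd.le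
      _ ≤ C_d * (C_d * (C_d * I)) := by
          refine mul_le_mul_of_nonneg_left (mul_le_mul_of_nonneg_left step2 hCd.le) hCd.le
      _ ≤ C_d * (C_d * (C_d * (r / c) ^ n)) := by
          refine mul_le_mul_of_nonneg_left (mul_le_mul_of_nonneg_left
            (mul_le_mul_of_nonneg_left hIlt.le hCd.le) hCd.le) hCd.le
      _ = C_d ^ 3 * (r / c) ^ n := by ring
  -- reverse doubling : G grows by a definite factor upon doubling the radius
  have hGrow : ∀ ρ : ℝ, 0 < ρ → G ρ + G ρ / C_d ^ 3 ≤ G (2 * ρ) := by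
    intro ρ hρ
    set e : EuclideanSpace ℝ (Fin n) := EuclideanSpace.single (⟨0, hn⟩ : Fin n) (1 : ℝ) with he
    have hnorme : ‖e‖ = 1 := by rw [he, EuclideanSpace.norm_single, norm_one]
    set y : EuclideanSpace ℝ (Fin n) := x₀ + (3 * ρ / 2) • e with hy
    have hdist : dist x₀ y = 3 * ρ / 2 := by
      rw [hy, dist_self_add_right, norm_smul, hnorme, mul_one, Real.norm_eq_abs,
        abs_of_pos (by positivity)]
    have h4 : ∫ z in ball y (4 * ρ), ω z ≤ C_d ^ 3 * ∫ z in ball y (ρ / 2), ω z := by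
      have d1 := hDub y (2 * ρ) (by positivity)
      have d2 := hDub y ρ hρ
      have d3 := hDub y (ρ / 2) (by positivity)
      rw [show 2 * (2 * ρ) = 4 * ρ by ring] at d1
      rw [show 2 * (ρ / 2) = ρ by ring] at d3
      calc ∫ z in ball y (4 * ρ), ω z ≤ C_d * ∫ z in ball y (2 * ρ), ω z := d1
        _ ≤ C_d * (C_d * ∫ z in ball y ρ, ω z) := mul_le_mul_of_nonneg_left d2 hCd.le
        _ ≤ C_d * (C_d * (C_d * ∫ z in ball y (ρ / 2), ω z)) :=
            mul_le_mul_of_nonneg_left (mul_le_mul_of_nonneg_left d3 hCd.le) hCd.le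
        _ = C_d ^ 3 * ∫ z in ball y (ρ / 2), ω z := by ring
    have hsub4 : ball x₀ ρ ⊆ ball y (4 * ρ) := by
      intro z hz
      have hz' : dist z x₀ < ρ := hz
      simp only [mem_ball]
      calc dist z y ≤ dist z x₀ + dist x₀ y := dist_triangle _ _ _
        _ < ρ + 3 * ρ / 2 := by rw [hdist]; linarith
        _ ≤ 4 * ρ := by linarith
    have hGy : G ρ / C_d ^ 3 ≤ ∫ z in ball y (ρ / 2), ω z := by
      rw [div_le_iff₀ (by positivity)]
      calc G ρ ≤ ∫ z in ball y (4 * ρ), ω z := hmono _ _ _ hsub4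
        _ ≤ C_d ^ 3 * ∫ z in ball y (ρ / 2), ω z := h4
        _ = (∫ z in ball y (ρ / 2), ω z) * C_d ^ 3 := by ring
    have hdisj : Disjoint (ball x₀ ρ) (ball y (ρ / 2)) := by
      rw [Set.disjoint_left]
      intro z hz1 hz2
      have h1 : dist z x₀ < ρ := hz1
      have h2 : dist z y < ρ / 2 := hz2
      have : dist x₀ y ≤ dist x₀ z + dist z y := dist_triangle _ _ _
      rw [hdist, dist_comm x₀ z] at this
      linarith
    have hsub2 : ball x₀ ρ ∪ ball y (ρ / 2) ⊆ ball x₀ (2 * ρ) := by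
      rintro z (hz | hz)
      · exact ball_subset_ball (by linarith) hz
      · have hz' : dist z y < ρ / 2 := hz
        simp only [mem_ball]
        calc dist z x₀ ≤ dist z y + dist y x₀ := dist_triangle _ _ _
          _ < ρ / 2 + 3 * ρ / 2 := by rw [dist_comm y x₀, hdist]; linarith
          _ = 2 * ρ := by ring
    have hunion : G ρ + ∫ z in ball y (ρ / 2), ω z
        = ∫ z in ball x₀ ρ ∪ ball y (ρ / 2), ω z := by
      rw [setIntegral_union hdisj measurableSet_ball (hIntBall _ _) (hIntBall _ _)]
    calc G ρ + G ρ / C_d ^ 3 ≤ G ρ + ∫ z in ball y (ρ / 2), ω z := by linarith [hGy]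
      _ = ∫ z in ball x₀ ρ ∪ ball y (ρ / 2), ω z := hunion
      _ ≤ G (2 * ρ) := by
          refine setIntegral_mono_set (hIntBall x₀ (2 * ρ)) (ae_of_all _ hωnn)
            hsub2.eventuallyLE
  -- G is positive on positive radii
  have hGpos : ∀ ρ : ℝ, 0 < ρ → 0 < G ρ := by
    intro ρ hρ
    rw [hGdef]
    rw [setIntegral_pos_iff_support_of_nonneg_ae (ae_of_all _ hωnn) (hIntBall _ _)]
    have : Function.support ω = Set.univ := by
      ext x; simp [Function.mem_support, (hpos x).ne']
    rw [this, Set.univ_inter]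
    exact measure_ball_pos _ _ hρ
  -- G is unbounded
  have hGub : ∀ M : ℝ, ∃ ρ : ℝ, 0 < ρ ∧ M < G ρ := by
    intro M
    set τ := 1 + 1 / C_d ^ 3 with hτ
    have hτ1 : 1 < τ := by
      have h0 : 0 < 1 / C_d ^ 3 := by positivity
      rw [hτ]
      linarith
    have hstep : ∀ k : ℕ, τ ^ k * G 1 ≤ G (2 ^ k) := by
      intro k
      induction k with
      | zero => simp
      | succ k ih =>
        have h1 : G (2 ^ k) + G (2 ^ k) / C_d ^ 3 ≤ G (2 * 2 ^ k) :=
          hGrow (2 ^ k) (by positivity)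
        have h2 : τ * G (2 ^ k) ≤ G (2 ^ (k + 1)) := by
          rw [pow_succ, mul_comm (2 ^ k) 2]
          calc τ * G (2 ^ k) = G (2 ^ k) + G (2 ^ k) / C_d ^ 3 := by
                rw [hτ]; field_simp
            _ ≤ G (2 * 2 ^ k) := h1
        calc τ ^ (k + 1) * G 1 = τ * (τ ^ k * G 1) := by ring
          _ ≤ τ * G (2 ^ k) := by
              refine mul_le_mul_of_nonneg_left ih (by linarith)
          _ ≤ G (2 ^ (k + 1)) := h2
    have hG1 : 0 < G 1 := hGpos 1 one_pos
    obtain ⟨k, hk⟩ := pow_unbounded_of_one_lt (M / G 1) hτ1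
    refine ⟨2 ^ k, by positivity, ?_⟩
    have : M < τ ^ k * G 1 := by
      rw [div_lt_iff₀ hG1] at hk
      linarith
    exact lt_of_lt_of_le this (hstep k)
  -- B is bounded
  obtain ⟨ρ₂, hρ₂pos, hBsub⟩ : ∃ ρ₂ : ℝ, 0 < ρ₂ ∧ B ⊆ ball x₀ ρ₂ := by
    by_contra h
    push_neg at h
    have hall : ∀ σ : ℝ, 0 < σ → G σ ≤ C_d ^ 3 * (r / c) ^ n := by
      intro σ hσ
      obtain ⟨x, hxB, hxout⟩ := Set.not_subset.1 (h σ hσ)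
      have hd : σ ≤ dist x₀ x := by
        rw [dist_comm]
        exact not_lt.1 fun hlt => hxout (mem_ball.2 hlt)
      have hxne : x ≠ x₀ := by
        intro hxe
        rw [hxe, dist_self] at hd
        linarith
      exact le_trans (Gmono (by linarith)) (key x hxB hxne)
    obtain ⟨ρ, hρpos, hρgt⟩ := hGub (C_d ^ 3 * (r / c) ^ n)
    exact absurd (hall ρ hρpos) (not_le.2 hρgt)
  have hIntB : IntegrableOn ω B volume := (hIntBall x₀ ρ₂).mono_set hBsub
  have hx₀B : x₀ ∈ B := by
    show dOmega n ω x₀ x₀ < r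
    rw [dOmega_self n ω hpos x₀]
    exact hr
  constructor
  · -- LOWER BOUND
    set tgt := (r / C) ^ n with htgt
    have htgtpos : 0 < tgt := by positivity
    set S := {ρ : ℝ | 0 < ρ ∧ G ρ < tgt} with hSdef
    -- S is nonempty : small balls have small mass
    have hSne : S.Nonempty := by
      obtain ⟨M₁, hM₁⟩ := (isCompact_closedBall x₀ 1).exists_bound_of_continuousOn
        hcont.continuousOn
      set M₂ := M₁ + 1 with hM₂
      have hM₂pos : 0 < M₂ := by
        have h1 := hM₁ x₀ (mem_closedBall_self zero_le_one)
        have h2 := norm_nonneg (ω x₀)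
        rw [hM₂]; linarith
      set vnb := (volume (ball (0 : EuclideanSpace ℝ (Fin n)) 1)).toReal with hvnb
      have hvnbnn : 0 ≤ vnb := ENNReal.toReal_nonneg
      set D := M₂ * vnb + 1 with hD
      have hDpos : 0 < D := by positivity
      set ρ := min 1 (tgt / (2 * D)) with hρ
      have hρpos : 0 < ρ := lt_min one_pos (by positivity)
      have hρ1 : ρ ≤ 1 := min_le_left _ _
      refine ⟨ρ, hρpos, ?_⟩
      have hvol : (volume (ball x₀ ρ)).toReal ≤ ρ ^ n * vnb := by
        have h1 : volume (ball x₀ ρ) ≤ volume (closedBall x₀ ρ) :=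
          measure_mono ball_subset_closedBall
        have h2 : volume (closedBall x₀ ρ) =
            ENNReal.ofReal (ρ ^ Module.finrank ℝ (EuclideanSpace ℝ (Fin n))) * volume (ball (0 : EuclideanSpace ℝ (Fin n)) 1) :=
          Measure.addHaar_closedBall volume x₀ hρpos.le
        have h3 : (volume (closedBall x₀ ρ)).toReal = ρ ^ n * vnb := by
          rw [h2, ENNReal.toReal_mul, ENNReal.toReal_ofReal (by positivity)]
          congr 2
          exact finrank_euclideanSpace_fin
        rw [← h3]
        exact ENNReal.toReal_mono measure_closedBall_lt_top.ne h1
      have hGle : G ρ ≤ M₂ * (volume (ball x₀ ρ)).toReal := by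
        have hconst : ∫ x in ball x₀ ρ, (M₂ : ℝ) = (volume (ball x₀ ρ)).toReal • M₂ :=
          setIntegral_const M₂
        have hle : G ρ ≤ ∫ x in ball x₀ ρ, (M₂ : ℝ) := by
          refine setIntegral_mono_on (hIntBall _ _)
            (integrableOn_const measure_ball_lt_top.ne) measurableSet_ball ?_
          intro x hx
          have hx1 : x ∈ closedBall x₀ 1 := by
            have : dist x x₀ < ρ := hx
            exact mem_closedBall.2 (by linarith)
          calc ω x ≤ ‖ω x‖ := le_abs_self _
            _ ≤ M₁ := hM₁ x hx1
            _ ≤ M₂ := by rw [hM₂]; linarith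
        rw [hconst, smul_eq_mul] at hle
        linarith
      have hρn : ρ ^ n ≤ ρ := pow_le_of_le_one hρpos.le hρ1 hn.ne'
      have hρsmall : ρ ≤ tgt / (2 * D) := min_le_right _ _
      calc G ρ ≤ M₂ * (volume (ball x₀ ρ)).toReal := hGle
        _ ≤ M₂ * (ρ ^ n * vnb) := mul_le_mul_of_nonneg_left hvol hM₂pos.le
        _ = M₂ * vnb * ρ ^ n := by ring
        _ ≤ D * ρ := by
            refine mul_le_mul (by rw [hD]; linarith) hρn (by positivity) hDpos.le
        _ ≤ D * (tgt / (2 * D)) := mul_le_mul_of_nonneg_left hρsmall hDpos.le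
        _ = tgt / 2 := by field_simp
        _ < tgt := by linarith
    -- S is bounded above
    obtain ⟨ρ₁, hρ₁pos, hρ₁gt⟩ := hGub tgt
    have hSbdd : BddAbove S := by
      refine ⟨ρ₁, fun ρ hρ => ?_⟩
      by_contra hlt
      push_neg at hlt
      have := Gmono hlt.le
      have := hρ.2
      linarith
    set σ := sSup S with hσ
    obtain ⟨ρ₀, hρ₀S⟩ := id hSne
    have hσpos : 0 < σ := lt_of_lt_of_le hρ₀S.1 (le_csSup hSbdd hρ₀S)
    -- the Euclidean ball of radius σ is inside B
    have hballB : ball x₀ σ ⊆ B := by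
      intro x hx
      have hx' : dist x x₀ < σ := hx
      obtain ⟨ρ, hρS, hρgt⟩ := exists_lt_of_lt_csSup hSne hx'
      set s := dist x₀ x with hs
      set m := midpoint ℝ x₀ x with hm
      set I := ∫ z in ball m (s / 2), ω z with hI
      have hI0 : 0 ≤ I := setIntegral_nonneg measurableSet_ball fun _ _ => hωnn _
      have hmdist : dist x₀ m = s / 2 := by
        rw [hm, dist_left_midpoint, show ‖(2 : ℝ)‖ = 2 from by norm_num, hs]
        ring
      have hsltρ : s < ρ := by rw [hs, dist_comm]; exact hρgt
      have hsubI : ball m (s / 2) ⊆ ball x₀ ρ := by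
        intro z hz
        have hz' : dist z m < s / 2 := hz
        simp only [mem_ball]
        calc dist z x₀ ≤ dist z m + dist m x₀ := dist_triangle _ _ _
          _ < s / 2 + s / 2 := by rw [dist_comm m x₀, hmdist]; linarith
          _ = s := by ring
          _ < ρ := hsltρ
      have hIlt : I < tgt := lt_of_le_of_lt (hmono _ _ _ hsubI) hρS.2
      have hδlt : deltaOmega n ω x₀ x < r / C := by
        have hδ : deltaOmega n ω x₀ x = I ^ ((n : ℝ)⁻¹) := rfl
        rw [hδ]
        have h1 : I ^ ((n : ℝ)⁻¹) < tgt ^ ((n : ℝ)⁻¹) :=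
          Real.rpow_lt_rpow hI0 hIlt (by positivity)
        rwa [htgt, Real.pow_rpow_inv_natCast (by positivity) hn.ne'] at h1
      show dOmega n ω x₀ x < r
      calc dOmega n ω x₀ x ≤ C * deltaOmega n ω x₀ x := (hA x₀ x).2
        _ < C * (r / C) := mul_lt_mul_of_pos_left hδlt hC
        _ = r := by field_simp
    -- G σ is at least tgt / C_d
    have h2σ : tgt ≤ G (2 * σ) := by
      by_contra hlt
      push_neg at hlt
      have h2σS : 2 * σ ∈ S := ⟨by linarith, hlt⟩
      have := le_csSup hSbdd h2σS
      linarith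
    have hdoub : G (2 * σ) ≤ C_d * G σ := hDub x₀ σ hσpos
    have hGσ : tgt / C_d ≤ G σ := by
      rw [div_le_iff₀ hCd]
      calc tgt ≤ G (2 * σ) := h2σ
        _ ≤ C_d * G σ := hdoub
        _ = G σ * C_d := by ring
    have hfin : G σ ≤ ∫ x in B, ω x :=
      setIntegral_mono_set hIntB (ae_of_all _ hωnn) hballB.eventuallyLE
    have : 1 / (C ^ n * C_d) * r ^ (n : ℝ) = tgt / C_d := by
      rw [Real.rpow_natCast, htgt, div_pow]
      field_simp
    rw [this]
    linarith
  · -- UPPER BOUND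
    set T := sSup ((dist x₀) '' B) with hT
    have hbdd : BddAbove ((dist x₀) '' B) := by
      refine ⟨ρ₂, ?_⟩
      rintro t ⟨x, hxB, rfl⟩
      have : dist x x₀ < ρ₂ := hBsub hxB
      rw [dist_comm]
      exact this.le
    have hne : ((dist x₀) '' B).Nonempty := ⟨dist x₀ x₀, Set.mem_image_of_mem _ hx₀B⟩
    have hT0 : 0 ≤ T := by
      have : dist x₀ x₀ ∈ (dist x₀) '' B := Set.mem_image_of_mem _ hx₀B
      have h := le_csSup hbdd this
      rw [dist_self] at h
      exact h
    have hfinal : ∫ x in B, ω x ≤ C_d ^ 3 * (r / c) ^ n := by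
      rcases eq_or_lt_of_le hT0 with hT0' | hTpos
      · -- T = 0 : B ⊆ {x₀}, integral vanishes
        have hBsing : B ⊆ {x₀} := by
          intro x hxB
          have h1 : dist x₀ x ≤ T := le_csSup hbdd (Set.mem_image_of_mem _ hxB)
          rw [← hT0'] at h1
          have h2 : dist x₀ x = 0 := le_antisymm h1 dist_nonneg
          exact Set.mem_singleton_iff.2 (dist_eq_zero.1 h2).symm
        have hsing : volume ({x₀} : Set (EuclideanSpace ℝ (Fin n))) = 0 := by
          have h := Measure.addHaar_closedBall volume x₀ (le_refl 0)
          rw [closedBall_zero] at h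
          rw [h, finrank_euclideanSpace_fin, zero_pow hn.ne', ENNReal.ofReal_zero, zero_mul]
        have hB0 : volume B = 0 :=
          le_antisymm (le_trans (measure_mono hBsing) (le_of_eq hsing)) zero_le
        rw [Measure.restrict_eq_zero.2 hB0, integral_zero_measure]
        positivity
      · obtain ⟨t, ⟨x₁, hx₁B, rfl⟩, ht⟩ := exists_lt_of_lt_csSup hne (half_lt_self hTpos)
        have hd₁pos : 0 < dist x₀ x₁ := lt_of_lt_of_le (by linarith) ht.le
        have hx₁ne : x₁ ≠ x₀ := fun h => by
          rw [h, dist_self] at hd₁pos; exact lt_irrefl _ hd₁pos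
        have hsub : B ⊆ ball x₀ (2 * dist x₀ x₁) := by
          intro x hxB
          have h1 : dist x₀ x ≤ T := le_csSup hbdd (Set.mem_image_of_mem _ hxB)
          have h2 : T < 2 * dist x₀ x₁ := by linarith
          simp only [mem_ball]
          rw [dist_comm]
          linarith
        calc ∫ x in B, ω x ≤ G (2 * dist x₀ x₁) := hmono _ _ _ hsub
          _ ≤ C_d ^ 3 * (r / c) ^ n := key x₁ hx₁B hx₁ne
    have : C_d ^ 3 / c ^ n * r ^ (n : ℝ) = C_d ^ 3 * (r / c) ^ n := by
      rw [Real.rpow_natCast, div_pow]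
      field_simp
    rw [this]
    exact hfinal
end

section
/- Upper volume bound for geodesic balls: if ω = e^{nu} is a strong A_∞ weight on ℝⁿ (with doubling constant C₃ and strong A_∞ constant C₄) and g = e^{2u}|dx|², then for every x₀ and r > 0, Vol_g(B^g(x₀,r)) ≤ C₁ rⁿ where C₁ depends only on C₃, C₄ and n. (Proof: enclose B^g(x₀,r) in a Euclidean ball realized by two boundary points x,y, use doubling and δ_ω ≤ C d_ω ≤ C d_g(x,y) ≤ 2Cr.) -/
open MeasureTheory Metric

/-!
Every point `x` of the geodesic ball `B = B^g(x₀, r)` other than `x₀` determines the Euclidean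
ball `ball x₀ (2 |x - x₀|)`, which contains `x`. Three doublings bound the `ω`-mass of that ball
by `C₃³` times the mass of the ball with diameter `[x₀, x]`, and the strong `A_∞` condition
bounds the latter by `(C₄ d_g(x₀, x))ⁿ ≤ (C₄ r)ⁿ`. These balls are nested, so `B \ {x₀}` lies in
a countable increasing union of balls of mass at most `C₃³ (C₄ r)ⁿ`, and so does `B` up to a
null set.
-/

open scoped ENNReal

section Covering

variable {X : Type*} [MetricSpace X] [MeasurableSpace X] [OpensMeasurableSpace X]
  {μ : Measure X} {x₀ : X} {s : Set X}

theorem setLIntegral_le_of_forall_ball_two_mul_dist_le [NullSingletonClass μ] {f : X → ℝ≥0∞}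
    {c : ℝ≥0∞}
    (h : ∀ x ∈ s, x ≠ x₀ → ∫⁻ y in ball x₀ (2 * dist x₀ x), f y ∂μ ≤ c) :
    ∫⁻ y in s, f y ∂μ ≤ c := by
  set Q : Set ℚ := {q | ∃ x ∈ s, x ≠ x₀ ∧ (q : ℝ) < 2 * dist x₀ x}
  have hcover : s \ {x₀} ⊆ ⋃ q : Q, ball x₀ (q : ℝ) := by
    rintro y ⟨hys, hy⟩
    have hpos : 0 < dist x₀ y := dist_pos.2 (Ne.symm hy)
    obtain ⟨q, hyq, hq⟩ := exists_rat_btwn (by linarith : dist x₀ y < 2 * dist x₀ y)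
    exact Set.mem_iUnion.2 ⟨⟨q, y, hys, hy, hq⟩, by rwa [mem_ball, dist_comm]⟩
  have hae : s ≤ᵐ[μ] ⋃ q : Q, ball x₀ (q : ℝ) := by
    rw [ae_le_set]
    refine measure_mono_null (fun y ⟨hys, hyU⟩ => ?_) (measure_singleton x₀)
    by_contra hy
    exact hyU (hcover ⟨hys, hy⟩)
  have hmono : Monotone fun q : Q => ball x₀ (q : ℝ) :=
    fun q q' hqq' => ball_subset_ball (by exact_mod_cast hqq')
  calc ∫⁻ y in s, f y ∂μ ≤ ∫⁻ y in ⋃ q : Q, ball x₀ (q : ℝ), f y ∂μ :=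
        lintegral_mono' (Measure.restrict_mono_ae hae) le_rfl
    _ = μ.withDensity f (⋃ q : Q, ball x₀ (q : ℝ)) :=
        (withDensity_apply f (MeasurableSet.iUnion fun _ => measurableSet_ball)).symm
    _ = ⨆ q : Q, μ.withDensity f (ball x₀ (q : ℝ)) := hmono.directed_le.measure_iUnion
    _ ≤ c := iSup_le fun ⟨q, x, hxs, hx, hq⟩ => by
        rw [withDensity_apply f measurableSet_ball]
        exact (lintegral_mono_set (ball_subset_ball hq.le)).trans (h x hxs hx)

theorem setIntegral_le_of_forall_ball_two_mul_dist_le [NullSingletonClass μ] [ProperSpace X]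
    [IsFiniteMeasureOnCompacts μ] {f : X → ℝ} (hf : Continuous f) (hf0 : ∀ x, 0 ≤ f x) {c : ℝ}
    (hc : 0 ≤ c) (h : ∀ x ∈ s, x ≠ x₀ → ∫ y in ball x₀ (2 * dist x₀ x), f y ∂μ ≤ c) :
    ∫ y in s, f y ∂μ ≤ c := by
  rw [integral_eq_lintegral_of_nonneg_ae (ae_of_all _ hf0) hf.aestronglyMeasurable]
  refine ENNReal.toReal_le_of_le_ofReal hc
    (setLIntegral_le_of_forall_ball_two_mul_dist_le (x₀ := x₀) fun x hxs hx => ?_)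
  have hint : IntegrableOn f (ball x₀ (2 * dist x₀ x)) μ :=
    (hf.continuousOn.integrableOn_compact (isCompact_closedBall _ _)).mono_set
      ball_subset_closedBall
  rw [← ofReal_integral_eq_lintegral_ofReal hint (ae_of_all _ fun y => hf0 y)]
  exact ENNReal.ofReal_le_ofReal (h x hxs hx)

end Covering

theorem setIntegral_ball_two_pow_mul_le {X : Type*} [PseudoMetricSpace X] [MeasurableSpace X]
    {μ : Measure X} {f : X → ℝ} {p : X} {C : ℝ} (hC : 0 ≤ C)
    (hdoub : ∀ R, 0 < R → ∫ x in ball p (2 * R), f x ∂μ ≤ C * ∫ x in ball p R, f x ∂μ)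
    {R : ℝ} (hR : 0 < R) (k : ℕ) :
    ∫ x in ball p (2 ^ k * R), f x ∂μ ≤ C ^ k * ∫ x in ball p R, f x ∂μ := by
  induction k with
  | zero => simp
  | succ k ih =>
    calc ∫ x in ball p (2 ^ (k + 1) * R), f x ∂μ = ∫ x in ball p (2 * (2 ^ k * R)), f x ∂μ := by
          rw [pow_succ, mul_comm _ (2 : ℝ), mul_assoc]
      _ ≤ C * ∫ x in ball p (2 ^ k * R), f x ∂μ := hdoub _ (by positivity)
      _ ≤ C * (C ^ k * ∫ x in ball p R, f x ∂μ) := by gcongr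
      _ = C ^ (k + 1) * ∫ x in ball p R, f x ∂μ := by ring

theorem ball_two_mul_dist_subset_ball_midpoint {E : Type*} [NormedAddCommGroup E]
    [NormedSpace ℝ E] (x y : E) :
    ball x (2 * dist x y) ⊆ ball (midpoint ℝ x y) (2 ^ 3 * (dist x y / 2)) := by
  refine ball_subset_ball' ?_
  rw [dist_left_midpoint, Real.norm_two]
  linarith [dist_nonneg (x := x) (y := y)]

section Weight

variable {n : ℕ} {ω : EuclideanSpace ℝ (Fin n) → ℝ}

theorem setIntegral_ball_midpoint_le_of_deltaOmega_le (hn : 0 < n) (hω0 : ∀ x, 0 ≤ ω x)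
    {x y : EuclideanSpace ℝ (Fin n)} {t : ℝ} (hδ : deltaOmega n ω x y ≤ t) :
    ∫ z in ball (midpoint ℝ x y) (dist x y / 2), ω z ≤ t ^ (n : ℝ) := by
  have hI : 0 ≤ ∫ z in ball (midpoint ℝ x y) (dist x y / 2), ω z :=
    setIntegral_nonneg measurableSet_ball fun z _ => hω0 z
  have ht : 0 ≤ t := (Real.rpow_nonneg hI _).trans hδ
  exact (Real.rpow_inv_le_iff_of_pos hI ht (by exact_mod_cast hn)).1 hδ

theorem setIntegral_ball_two_mul_dist_le_of_deltaOmega_le (hn : 0 < n) (hω : Continuous ω)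
    (hω0 : ∀ x, 0 ≤ ω x) {C : ℝ} (hC : 0 ≤ C)
    (hdoub : ∀ p R, 0 < R → ∫ z in ball p (2 * R), ω z ≤ C * ∫ z in ball p R, ω z)
    {x y : EuclideanSpace ℝ (Fin n)} (hxy : x ≠ y) {t : ℝ}
    (hδ : deltaOmega n ω x y ≤ t) :
    ∫ z in ball x (2 * dist x y), ω z ≤ C ^ 3 * t ^ (n : ℝ) := by
  set m := midpoint ℝ x y
  have hR : 0 < dist x y / 2 := by linarith [dist_pos.2 hxy]
  have hint : IntegrableOn ω (ball m (2 ^ 3 * (dist x y / 2))) :=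
    (hω.continuousOn.integrableOn_compact (isCompact_closedBall _ _)).mono_set
      ball_subset_closedBall
  calc ∫ z in ball x (2 * dist x y), ω z ≤ ∫ z in ball m (2 ^ 3 * (dist x y / 2)), ω z :=
        setIntegral_mono_set hint (ae_of_all _ fun z => hω0 z)
          (ball_two_mul_dist_subset_ball_midpoint x y).eventuallyLE
    _ ≤ C ^ 3 * ∫ z in ball m (dist x y / 2), ω z :=
        setIntegral_ball_two_pow_mul_le hC (hdoub m) hR 3
    _ ≤ C ^ 3 * t ^ (n : ℝ) := by
        gcongr
        exact setIntegral_ball_midpoint_le_of_deltaOmega_le hn hω0 hδ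

end Weight

theorem stmt_7 {n : ℕ} (hn : 0 < n) (C₃ C₄ : ℝ) (hC₃ : 0 < C₃) (hC₄ : 0 < C₄) :
    ∃ C₁ > 0, ∀ u : EuclideanSpace ℝ (Fin n) → ℝ, Continuous u →
      ∀ ω : EuclideanSpace ℝ (Fin n) → ℝ, ω = (fun x => Real.exp ((n : ℝ) * u x)) →
      -- doubling with constant C₃ on Euclidean balls
      (∀ (p : EuclideanSpace ℝ (Fin n)) (R : ℝ), 0 < R →
        ∫ x in ball p (2 * R), ω x ≤ C₃ * ∫ x in ball p R, ω x) →
      -- strong A_∞ bound : δ_ω(x,y) ≤ C₄ d_g(x,y)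
      (∀ x y, deltaOmega n ω x y ≤ C₄ * dOmega n ω x y) →
      ∀ (x₀ : EuclideanSpace ℝ (Fin n)) (r : ℝ), 0 < r →
        (∫ x in {x | dOmega n ω x₀ x < r}, ω x) ≤ C₁ * r ^ (n : ℝ) := by
  refine ⟨C₃ ^ 3 * C₄ ^ (n : ℝ), by positivity, ?_⟩
  intro u hu ω hω hdoub hA x₀ r hr
  have hωc : Continuous ω := hω ▸ by fun_prop
  have hω0 : ∀ x, 0 ≤ ω x := fun x => hω ▸ (Real.exp_pos _).le
  have : Nonempty (Fin n) := ⟨⟨0, hn⟩⟩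
  rw [mul_assoc, ← Real.mul_rpow hC₄.le hr.le]
  refine setIntegral_le_of_forall_ball_two_mul_dist_le (x₀ := x₀) hωc hω0 (by positivity)
    fun x hx hne => ?_
  have hδ : deltaOmega n ω x₀ x ≤ C₄ * r :=
    (hA x₀ x).trans (mul_le_mul_of_nonneg_left (le_of_lt hx) hC₄.le)
  exact setIntegral_ball_two_mul_dist_le_of_deltaOmega_le hn hωc hω0 hC₃.le hdoub
    (Ne.symm hne) hδ
end
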